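/- arXiv:1904.10632 — 4 statements merged into one kernel-verified Lean document; each statement's English description precedes it below -/
import Mathlib

section
/- Let Ω be a finite sample space, let p* be the maximum entropy distribution among all distributions on Ω satisfying a set of linear moment constraints of the form E_p[f_i] = θ_i (where each f_i is an indicator function), and assume p* has full support. Then for any distribution q on Ω satisfying the same constraints, the cross entropy -∑_ω q(ω) log p*(ω) equals the entropy H(p*) = -∑_ω p*(ω) log p*(ω). -/
open Finset

noncomputable section

/-- A probability distribution on a finite sample space. -/
def IsDist {Ω : Type*} [Fintype Ω] (p : Ω → ℝ) : Prop :=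
  (∀ ω, 0 ≤ p ω) ∧ ∑ ω, p ω = 1

/-- Shannon entropy of a distribution on a finite space (0·log 0 = 0 via Real.log 0 = 0). -/
def entropy {Ω : Type*} [Fintype Ω] (p : Ω → ℝ) : ℝ :=
  -∑ ω, p ω * Real.log (p ω)

/-- if `pstar` is the maximum entropy distribution among all distributions
satisfying the linear moment constraints `E_p[f i] = θ i` (each `f i` an indicator), and
`pstar` has full support, then for any distribution `q` satisfying the same constraints,
the cross entropy `-∑ ω, q ω * log (pstar ω)` equals the entropy of `pstar`. -/
theorem crossEntropy_eq_entropy_of_maxEnt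
    {Ω ι : Type*} [Fintype Ω] [Fintype ι]
    (f : ι → Ω → ℝ) (θ : ι → ℝ)
    (hind : ∀ i ω, f i ω = 0 ∨ f i ω = 1)
    (pstar : Ω → ℝ)
    (hdist : IsDist pstar)
    (hsupp : ∀ ω, 0 < pstar ω)
    (hconstr : ∀ i, ∑ ω, pstar ω * f i ω = θ i)
    (hmax : ∀ p : Ω → ℝ, IsDist p → (∀ i, ∑ ω, p ω * f i ω = θ i) →
      entropy p ≤ entropy pstar)
    (q : Ω → ℝ) (hq : IsDist q)
    (hqc : ∀ i, ∑ ω, q ω * f i ω = θ i) :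
    -∑ ω, q ω * Real.log (pstar ω) = entropy pstar := by
  classical
  -- Ω is nonempty
  have hne : Nonempty Ω := by
    by_contra h
    rw [not_nonempty_iff] at h
    have := hdist.2
    simp at this
  -- direction vector
  obtain ⟨d, hd⟩ : ∃ d : Ω → ℝ, d = fun ω => q ω - pstar ω := ⟨_, rfl⟩
  have hsumd : ∑ ω, d ω = 0 := by
    simp [hd, Finset.sum_sub_distrib, hdist.2, hq.2]
  -- bounds
  have hple1 : ∀ ω, pstar ω ≤ 1 := by
    intro ω
    have := Finset.single_le_sum (f := pstar) (fun i _ => hdist.1 i) (Finset.mem_univ ω)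
    linarith [hdist.2]
  have hqle1 : ∀ ω, q ω ≤ 1 := by
    intro ω
    have := Finset.single_le_sum (f := q) (fun i _ => hq.1 i) (Finset.mem_univ ω)
    linarith [hq.2]
  have hd1 : ∀ ω, |d ω| ≤ 1 := by
    intro ω
    rw [abs_le]
    constructor <;> simp only [hd] <;>
      [linarith [hq.1 ω, hple1 ω]; linarith [hdist.1 ω, hqle1 ω]]
  -- minimum of pstar
  have huniv : (Finset.univ : Finset Ω).Nonempty := Finset.univ_nonempty
  obtain ⟨ε, hεpos, hεle⟩ : ∃ ε : ℝ, 0 < ε ∧ ∀ ω, ε ≤ pstar ω := by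
    refine ⟨Finset.univ.inf' huniv pstar, ?_, fun ω => Finset.inf'_le _ (Finset.mem_univ ω)⟩
    rw [Finset.lt_inf'_iff]
    intro ω _
    exact hsupp ω
  -- the perturbed family
  obtain ⟨φ, hφ⟩ : ∃ φ : ℝ → ℝ,
      φ = fun t => -∑ ω, (pstar ω + t * d ω) * Real.log (pstar ω + t * d ω) := ⟨_, rfl⟩
  have hφ0 : φ 0 = entropy pstar := by simp [hφ, entropy]
  -- local max at 0
  have hlocal : IsLocalMax φ 0 := by
    have hmem : Set.Ioo (-(ε/2)) (ε/2) ∈ nhds (0 : ℝ) :=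
      Ioo_mem_nhds (by linarith) (by linarith)
    refine Filter.eventually_of_mem hmem ?_
    intro t ht
    have habs : |t| < ε / 2 := abs_lt.2 ⟨ht.1, ht.2⟩
    have hnn : ∀ ω, 0 ≤ pstar ω + t * d ω := by
      intro ω
      have h1 : |t * d ω| ≤ ε / 2 := by
        rw [abs_mul]
        calc |t| * |d ω| ≤ (ε/2) * 1 :=
          mul_le_mul habs.le (hd1 ω) (abs_nonneg _) (by linarith)
        _ = ε/2 := mul_one _
      have h2 : -(ε/2) ≤ t * d ω := by
        have := neg_abs_le (t * d ω); linarith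
      linarith [hεle ω]
    have hsum1 : ∑ ω, (pstar ω + t * d ω) = 1 := by
      rw [Finset.sum_add_distrib, ← Finset.mul_sum, hsumd, hdist.2]
      ring
    have hcon : ∀ i, ∑ ω, (pstar ω + t * d ω) * f i ω = θ i := by
      intro i
      have : ∀ ω, (pstar ω + t * d ω) * f i ω
          = pstar ω * f i ω + t * (q ω * f i ω - pstar ω * f i ω) := by
        intro ω; simp only [hd]; ring
      rw [Finset.sum_congr rfl fun ω _ => this ω, Finset.sum_add_distrib,
        ← Finset.mul_sum, Finset.sum_sub_distrib, hconstr i, hqc i]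
      ring
    have := hmax (fun ω => pstar ω + t * d ω) ⟨hnn, hsum1⟩ hcon
    simpa [entropy, hφ0, hφ] using this
  -- derivative of φ at 0
  obtain ⟨D, hD⟩ : ∃ D : ℝ, D = ∑ ω, d ω * (Real.log (pstar ω) + 1) := ⟨_, rfl⟩
  have hderiv : HasDerivAt φ (-D) 0 := by
    rw [hφ, hD]
    apply HasDerivAt.neg
    apply HasDerivAt.fun_sum
    intro ω _
    have hu : HasDerivAt (fun t : ℝ => pstar ω + t * d ω) (d ω) 0 := by
      simpa using ((hasDerivAt_id (0:ℝ)).mul_const (d ω)).const_add (pstar ω)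
    have hx : pstar ω + (0:ℝ) * d ω ≠ 0 := by simpa using (hsupp ω).ne'
    have hlog : HasDerivAt (fun t : ℝ => Real.log (pstar ω + t * d ω))
        ((pstar ω + (0:ℝ) * d ω)⁻¹ * d ω) 0 :=
      by have := (Real.hasDerivAt_log hx).comp 0 hu; exact this
    have : HasDerivAt (fun y => (pstar ω + y * d ω) * Real.log (pstar ω + y * d ω)) _ 0 :=
      hu.mul hlog
    refine this.congr_deriv ?_
    have hps : pstar ω ≠ 0 := (hsupp ω).ne'
    simp only [zero_mul, add_zero, ← mul_assoc, mul_inv_cancel₀ hps]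
    ring
  have hD0 : D = 0 := by
    have := hlocal.hasDerivAt_eq_zero hderiv
    linarith
  -- unpack D
  have hexp : D = (∑ ω, q ω * Real.log (pstar ω)) - (∑ ω, pstar ω * Real.log (pstar ω))
      + ((∑ ω, q ω) - ∑ ω, pstar ω) := by
    rw [hD]
    have : ∀ ω, d ω * (Real.log (pstar ω) + 1)
        = (q ω * Real.log (pstar ω) - pstar ω * Real.log (pstar ω)) + (q ω - pstar ω) := by
      intro ω; simp only [hd]; ring
    rw [Finset.sum_congr rfl fun ω _ => this ω, Finset.sum_add_distrib,
      Finset.sum_sub_distrib, Finset.sum_sub_distrib]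
  rw [hdist.2, hq.2] at hexp
  simp only [entropy]
  linarith [hexp, hD0]
end
end

section
/- Let Ω be finite, let 𝓗 ⊆ 𝓕 be two families of linear moment constraints, let p*₁ be the maximum entropy distribution satisfying all constraints in 𝓕 and p*₂ the maximum entropy distribution satisfying all constraints in 𝓗, both with full support. Then for any distribution q satisfying all constraints in 𝓕, D(q‖p*₂) = D(q‖p*₁) + D(p*₁‖p*₂). -/
open Finset

noncomputable section

def KL {Ω : Type*} [Fintype Ω] (q p : Ω → ℝ) : ℝ :=
  ∑ ω, q ω * Real.log (q ω / p ω)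

/-- Stationarity of entropy at an interior maximizer along the segment toward `r`. -/
lemma entropy_stationary {Ω : Type*} [Fintype Ω] (p r : Ω → ℝ)
    (hp : IsDist p) (hr : IsDist r) (hppos : ∀ ω, 0 < p ω)
    (hmax : ∀ t : ℝ, (∀ ω, 0 ≤ p ω + t * (r ω - p ω)) →
      entropy (fun ω => p ω + t * (r ω - p ω)) ≤ entropy p) :
    ∑ ω, (r ω - p ω) * Real.log (p ω) = 0 := by
  set φ : ℝ → ℝ := fun t => entropy (fun ω => p ω + t * (r ω - p ω)) with hφ
  have hpos : ∀ᶠ t in nhds (0 : ℝ), ∀ ω, 0 < p ω + t * (r ω - p ω) := by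
    rw [Filter.eventually_all]
    intro ω
    have hc : Continuous fun t : ℝ => p ω + t * (r ω - p ω) := by continuity
    have : (fun t : ℝ => p ω + t * (r ω - p ω)) 0 ∈ Set.Ioi (0 : ℝ) := by
      simpa using hppos ω
    exact hc.continuousAt.eventually_mem (isOpen_Ioi.mem_nhds this)
  have hloc : IsLocalMax φ 0 := by
    filter_upwards [hpos] with t ht
    have h0 : φ 0 = entropy p := by
      simp [hφ, entropy]
    rw [h0]
    exact hmax t (fun ω => (ht ω).le)
  have hderiv : HasDerivAt φ (-∑ ω, (Real.log (p ω) + 1) * (r ω - p ω)) 0 := by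
    apply HasDerivAt.neg
    apply HasDerivAt.fun_sum
    intro ω _
    have h1 : HasDerivAt (fun t : ℝ => p ω + t * (r ω - p ω)) (r ω - p ω) 0 := by
      simpa using ((hasDerivAt_id (0 : ℝ)).mul_const (r ω - p ω)).const_add (p ω)
    have h2 : HasDerivAt (fun x : ℝ => x * Real.log x) (Real.log (p ω) + 1)
        (p ω + 0 * (r ω - p ω)) := by
      have := Real.hasDerivAt_mul_log (x := p ω) (hppos ω).ne'
      simpa using this
    exact h2.comp 0 h1
  have hz := hloc.hasDerivAt_eq_zero hderiv
  have hsum : ∑ ω, (r ω - p ω) = 0 := by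
    rw [Finset.sum_sub_distrib, hr.2, hp.2, sub_self]
  have : ∑ ω, (Real.log (p ω) + 1) * (r ω - p ω) = 0 := by linarith [neg_eq_zero.mp hz]
  calc ∑ ω, (r ω - p ω) * Real.log (p ω)
      = ∑ ω, (Real.log (p ω) + 1) * (r ω - p ω) - ∑ ω, (r ω - p ω) := by
        rw [← Finset.sum_sub_distrib]; apply Finset.sum_congr rfl; intro ω _; ring
    _ = 0 := by rw [this, hsum, sub_self]

/-- The convex combination of two distributions satisfying linear constraints. -/
lemma mix_isDist {Ω : Type*} [Fintype Ω] (p r : Ω → ℝ) (hp : IsDist p) (hr : IsDist r)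
    (t : ℝ) (hpos : ∀ ω, 0 ≤ p ω + t * (r ω - p ω)) :
    IsDist (fun ω => p ω + t * (r ω - p ω)) := by
  refine ⟨hpos, ?_⟩
  have : ∑ ω, (p ω + t * (r ω - p ω)) = ∑ ω, p ω + t * (∑ ω, r ω - ∑ ω, p ω) := by
    rw [Finset.sum_add_distrib, ← Finset.mul_sum, Finset.sum_sub_distrib]
  rw [this, hp.2, hr.2]; ring

/-- Pythagorean decomposition. The family 𝓕 of constraints is indexed by `ι`,
and the subfamily 𝓗 ⊆ 𝓕 by the finset `S`.  `p1` is the maximum entropy distribution for 𝓕,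
`p2` the maximum entropy distribution for 𝓗, both with full support.  Then for any
distribution `q` satisfying all constraints in 𝓕, `D(q‖p2) = D(q‖p1) + D(p1‖p2)`. -/
theorem KL_pythagorean_decomposition
    {Ω ι : Type*} [Fintype Ω] [Fintype ι]
    (f : ι → Ω → ℝ) (θ : ι → ℝ) (S : Finset ι)
    (hind : ∀ i ω, f i ω = 0 ∨ f i ω = 1)
    (p1 p2 : Ω → ℝ)
    (hp1 : IsDist p1) (hp2 : IsDist p2)
    (hp1pos : ∀ ω, 0 < p1 ω) (hp2pos : ∀ ω, 0 < p2 ω)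
    (hp1c : ∀ i, ∑ ω, p1 ω * f i ω = θ i)
    (hp2c : ∀ i ∈ S, ∑ ω, p2 ω * f i ω = θ i)
    (hp1max : ∀ p : Ω → ℝ, IsDist p → (∀ i, ∑ ω, p ω * f i ω = θ i) →
      entropy p ≤ entropy p1)
    (hp2max : ∀ p : Ω → ℝ, IsDist p → (∀ i ∈ S, ∑ ω, p ω * f i ω = θ i) →
      entropy p ≤ entropy p2)
    (q : Ω → ℝ) (hq : IsDist q)
    (hqc : ∀ i, ∑ ω, q ω * f i ω = θ i) :
    KL q p2 = KL q p1 + KL p1 p2 := by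
  -- mixed distributions satisfy constraints
  have hmixc : ∀ (p r : Ω → ℝ) (t : ℝ) (i : ι),
      (∑ ω, p ω * f i ω = θ i) → (∑ ω, r ω * f i ω = θ i) →
      ∑ ω, (p ω + t * (r ω - p ω)) * f i ω = θ i := by
    intro p r t i hpθ hrθ
    have : ∑ ω, (p ω + t * (r ω - p ω)) * f i ω
        = ∑ ω, p ω * f i ω + t * (∑ ω, r ω * f i ω - ∑ ω, p ω * f i ω) := by
      rw [show (∑ ω, (p ω + t * (r ω - p ω)) * f i ω)
          = ∑ ω, (p ω * f i ω + t * (r ω * f i ω - p ω * f i ω)) from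
            Finset.sum_congr rfl fun ω _ => by ring]
      rw [Finset.sum_add_distrib, ← Finset.mul_sum, Finset.sum_sub_distrib]
    rw [this, hpθ, hrθ]; ring
  -- three stationarity facts
  have hA : ∑ ω, (q ω - p1 ω) * Real.log (p1 ω) = 0 := by
    apply entropy_stationary p1 q hp1 hq hp1pos
    intro t ht
    exact hp1max _ (mix_isDist p1 q hp1 hq t ht)
      (fun i => hmixc p1 q t i (hp1c i) (hqc i))
  have hB : ∑ ω, (p1 ω - p2 ω) * Real.log (p2 ω) = 0 := by
    apply entropy_stationary p2 p1 hp2 hp1 hp2pos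
    intro t ht
    exact hp2max _ (mix_isDist p2 p1 hp2 hp1 t ht)
      (fun i hi => hmixc p2 p1 t i (hp2c i hi) (hp1c i))
  have hC : ∑ ω, (q ω - p2 ω) * Real.log (p2 ω) = 0 := by
    apply entropy_stationary p2 q hp2 hq hp2pos
    intro t ht
    exact hp2max _ (mix_isDist p2 q hp2 hq t ht)
      (fun i hi => hmixc p2 q t i (hp2c i hi) (hqc i))
  -- expand KL
  have expand : ∀ (r p : Ω → ℝ), (∀ ω, 0 ≤ r ω) → (∀ ω, 0 < p ω) →
      KL r p = ∑ ω, r ω * Real.log (r ω) - ∑ ω, r ω * Real.log (p ω) := by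
    intro r p hr hppos
    rw [KL, ← Finset.sum_sub_distrib]
    apply Finset.sum_congr rfl
    intro ω _
    rcases eq_or_lt_of_le (hr ω) with h | h
    · simp [← h]
    · rw [Real.log_div h.ne' (hppos ω).ne']; ring
  rw [expand q p2 hq.1 hp2pos, expand q p1 hq.1 hp1pos, expand p1 p2 hp1.1 hp2pos]
  have e1 : ∑ ω, q ω * Real.log (p1 ω) - ∑ ω, p1 ω * Real.log (p1 ω)
      = ∑ ω, (q ω - p1 ω) * Real.log (p1 ω) := by
    rw [← Finset.sum_sub_distrib]; apply Finset.sum_congr rfl; intro ω _; ring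
  have e2 : ∑ ω, q ω * Real.log (p2 ω) - ∑ ω, p1 ω * Real.log (p2 ω)
      = ∑ ω, (q ω - p2 ω) * Real.log (p2 ω) - ∑ ω, (p1 ω - p2 ω) * Real.log (p2 ω) := by
    rw [← Finset.sum_sub_distrib, ← Finset.sum_sub_distrib]
    exact Finset.sum_congr rfl fun ω _ => by ring
  have h1 : ∑ ω, q ω * Real.log (p1 ω) = ∑ ω, p1 ω * Real.log (p1 ω) := by linarith [e1, hA]
  have h2 : ∑ ω, q ω * Real.log (p2 ω) = ∑ ω, p1 ω * Real.log (p2 ω) := by linarith [e2, hB, hC]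
  linarith [h1, h2]
end
end

section
/- Let Ω be finite and let 𝓗 ⊆ 𝓕 be two families of linear moment constraints, with maximum entropy distributions p*₁ (for 𝓕) and p*₂ (for 𝓗), both of full support. Then for any distribution q satisfying all constraints in 𝓕, D(q‖p*₁) ≤ D(q‖p*₂). In particular, enlarging the family of known constraints can only decrease the rank measure. -/
open Finset

noncomputable section

/-- Pythagorean identity from the first-order optimality condition: if the entropy of
`p` is locally maximal along the segment from `p` towards `q` (in both directions),
and `p` has full support, then the cross entropy of `q` w.r.t. `p` equals the
entropy of `p`. -/
lemma key_pythag {Ω : Type*} [Fintype Ω] (p q : Ω → ℝ)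
    (hppos : ∀ ω, 0 < p ω)
    (hd : ∑ ω, (q ω - p ω) = 0)
    (hmax : ∀ᶠ t in nhds (0:ℝ),
      entropy (fun ω => p ω + t * (q ω - p ω)) ≤ entropy p) :
    ∑ ω, q ω * Real.log (p ω) = ∑ ω, p ω * Real.log (p ω) := by
  set d : Ω → ℝ := fun ω => q ω - p ω with hdd
  set F : ℝ → ℝ := fun t => entropy (fun ω => p ω + t * d ω) with hF
  have hF0 : F 0 = entropy p := by
    simp [hF, entropy]
  have hloc : IsLocalMax F 0 := by
    rw [IsLocalMax, IsMaxFilter, hF0]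
    exact hmax
  have hderiv : HasDerivAt F (-∑ ω, (Real.log (p ω) + 1) * d ω) 0 := by
    have h1 : HasDerivAt (fun t => ∑ ω, (p ω + t * d ω) * Real.log (p ω + t * d ω))
        (∑ ω, (Real.log (p ω) + 1) * d ω) 0 := by
      apply HasDerivAt.fun_sum
      intro ω _
      have hinner : HasDerivAt (fun t : ℝ => p ω + t * d ω) (d ω) 0 := by
        simpa using (hasDerivAt_id (0:ℝ)).mul_const (d ω) |>.const_add (p ω)
      have hval : (p ω + 0 * d ω) = p ω := by ring
      have houter : HasDerivAt (fun x : ℝ => x * Real.log x)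
          (Real.log (p ω) + 1) (p ω + 0 * d ω) := by
        rw [hval]; exact Real.hasDerivAt_mul_log (hppos ω).ne'
      simpa [Function.comp_def] using houter.comp 0 hinner
    simpa [hF, entropy] using h1.fun_neg
  have h0 := hloc.hasDerivAt_eq_zero hderiv
  have h2 : ∑ ω, (Real.log (p ω) + 1) * d ω = 0 := by linarith
  have h3 : ∑ ω, (Real.log (p ω) + 1) * d ω
      = ∑ ω, Real.log (p ω) * d ω + ∑ ω, d ω := by
    rw [← Finset.sum_add_distrib]; congr 1; ext ω; ring
  have h4 : ∑ ω, Real.log (p ω) * d ω = 0 := by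
    rw [h3, hd] at h2; linarith
  have h5 : ∑ ω, Real.log (p ω) * d ω
      = ∑ ω, q ω * Real.log (p ω) - ∑ ω, p ω * Real.log (p ω) := by
    rw [← Finset.sum_sub_distrib]; congr 1; ext ω; simp [hdd]; ring
  rw [h5] at h4; linarith

lemma KL_eq {Ω : Type*} [Fintype Ω] (q p : Ω → ℝ)
    (hppos : ∀ ω, 0 < p ω) :
    KL q p = ∑ ω, q ω * Real.log (q ω) - ∑ ω, q ω * Real.log (p ω) := by
  rw [KL, ← Finset.sum_sub_distrib]
  congr 1; ext ω
  by_cases h : q ω = 0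
  · simp [h]
  · rw [Real.log_div h (hppos ω).ne']; ring

/-- If `p` is a full-support distribution maximizing entropy over distributions
satisfying property `P`, and `P` holds along the whole line through `p` and `q`,
then the entropy of the mixtures near `p` is at most that of `p`. -/
lemma eventually_entropy_le {Ω : Type*} [Fintype Ω] (p q : Ω → ℝ)
    (hp : IsDist p) (hq : IsDist q) (hppos : ∀ ω, 0 < p ω)
    (P : (Ω → ℝ) → Prop)
    (hPt : ∀ t : ℝ, P (fun ω => p ω + t * (q ω - p ω)))
    (hmax : ∀ r : Ω → ℝ, IsDist r → P r → entropy r ≤ entropy p) :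
    ∀ᶠ t in nhds (0:ℝ),
      entropy (fun ω => p ω + t * (q ω - p ω)) ≤ entropy p := by
  have hpos : ∀ᶠ t in nhds (0:ℝ), ∀ ω, 0 < p ω + t * (q ω - p ω) := by
    rw [Filter.eventually_all]
    intro ω
    have hc : Continuous (fun t : ℝ => p ω + t * (q ω - p ω)) := by continuity
    have ht : Filter.Tendsto (fun t : ℝ => p ω + t * (q ω - p ω))
        (nhds 0) (nhds (p ω)) := by
      have := hc.tendsto 0
      simpa using this
    exact ht.eventually (eventually_gt_nhds (hppos ω))
  filter_upwards [hpos] with t htpos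
  apply hmax _ _ (hPt t)
  refine ⟨fun ω => (htpos ω).le, ?_⟩
  have : ∑ ω, (p ω + t * (q ω - p ω)) = ∑ ω, p ω + t * (∑ ω, q ω - ∑ ω, p ω) := by
    rw [Finset.sum_add_distrib, ← Finset.mul_sum, Finset.sum_sub_distrib]
  rw [this, hp.2, hq.2]; ring

/-- enlarging the constraint family decreases the rank. The family 𝓕 of constraints is indexed by `ι`,
and the subfamily 𝓗 ⊆ 𝓕 by the finset `S`.  `p1` is the maximum entropy distribution for 𝓕,
`p2` the maximum entropy distribution for 𝓗, both with full support.  Then for any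
distribution `q` satisfying all constraints in 𝓕, `D(q‖p1) ≤ D(q‖p2)`. -/
theorem KL_mono_constraints
    {Ω ι : Type*} [Fintype Ω] [Fintype ι]
    (f : ι → Ω → ℝ) (θ : ι → ℝ) (S : Finset ι)
    (hind : ∀ i ω, f i ω = 0 ∨ f i ω = 1)
    (p1 p2 : Ω → ℝ)
    (hp1 : IsDist p1) (hp2 : IsDist p2)
    (hp1pos : ∀ ω, 0 < p1 ω) (hp2pos : ∀ ω, 0 < p2 ω)
    (hp1c : ∀ i, ∑ ω, p1 ω * f i ω = θ i)
    (hp2c : ∀ i ∈ S, ∑ ω, p2 ω * f i ω = θ i)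
    (hp1max : ∀ p : Ω → ℝ, IsDist p → (∀ i, ∑ ω, p ω * f i ω = θ i) →
      entropy p ≤ entropy p1)
    (hp2max : ∀ p : Ω → ℝ, IsDist p → (∀ i ∈ S, ∑ ω, p ω * f i ω = θ i) →
      entropy p ≤ entropy p2)
    (q : Ω → ℝ) (hq : IsDist q)
    (hqc : ∀ i, ∑ ω, q ω * f i ω = θ i) :
    KL q p1 ≤ KL q p2 := by
  have hdsum : ∀ p : Ω → ℝ, IsDist p → ∑ ω, (q ω - p ω) = 0 := by
    intro p hp
    rw [Finset.sum_sub_distrib, hq.2, hp.2]; ring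
  have hmix : ∀ (p : Ω → ℝ) (i : ι) (t : ℝ),
      ∑ ω, p ω * f i ω = θ i → ∑ ω, q ω * f i ω = θ i →
      ∑ ω, (p ω + t * (q ω - p ω)) * f i ω = θ i := by
    intro p i t hpi hqi
    have : ∀ ω, (p ω + t * (q ω - p ω)) * f i ω
        = p ω * f i ω + t * (q ω * f i ω - p ω * f i ω) := by
      intro ω; ring
    rw [Finset.sum_congr rfl (fun ω _ => this ω), Finset.sum_add_distrib,
      ← Finset.mul_sum, Finset.sum_sub_distrib, hpi, hqi]
    ring
  -- Pythagorean identity for p1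
  have key1 : ∑ ω, q ω * Real.log (p1 ω) = ∑ ω, p1 ω * Real.log (p1 ω) := by
    apply key_pythag p1 q hp1pos (hdsum p1 hp1)
    exact eventually_entropy_le p1 q hp1 hq hp1pos
      (fun r => ∀ i, ∑ ω, r ω * f i ω = θ i)
      (fun t i => hmix p1 i t (hp1c i) (hqc i)) hp1max
  -- Pythagorean identity for p2
  have key2 : ∑ ω, q ω * Real.log (p2 ω) = ∑ ω, p2 ω * Real.log (p2 ω) := by
    apply key_pythag p2 q hp2pos (hdsum p2 hp2)
    exact eventually_entropy_le p2 q hp2 hq hp2pos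
      (fun r => ∀ i ∈ S, ∑ ω, r ω * f i ω = θ i)
      (fun t i hi => hmix p2 i t (hp2c i hi) (hqc i)) hp2max
  -- p1 satisfies the S-constraints, so entropy p1 ≤ entropy p2
  have hEnt : entropy p1 ≤ entropy p2 := hp2max p1 hp1 (fun i _ => hp1c i)
  have hEnt' : ∑ ω, p2 ω * Real.log (p2 ω) ≤ ∑ ω, p1 ω * Real.log (p1 ω) := by
    unfold entropy at hEnt; linarith
  rw [KL_eq q p1 hp1pos, KL_eq q p2 hp2pos, key1, key2]
  linarith
end
end

section
/- Let p* be a maximum entropy distribution on finite Ω subject to linear moment constraints, and suppose p*(ω₀) = 0 for some ω₀ ∈ Ω. Then every distribution p satisfying the same constraints also has p(ω₀) = 0. -/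
/-!
Mixing the maximiser `p*` with a feasible `p` gives feasible distributions
`(1 - t) p* + t p`. By concavity of `x ↦ -x log x` their entropy is at least
`(1 - t) H(p*) + t H(p) - p(ω₀) t log t`, the last term coming from the point `ω₀`
where `p*` vanishes. If `p(ω₀) > 0`, the infinite slope of `-t log t` at `0` makes this
exceed `H(p*)` for small `t > 0`, contradicting maximality.
-/

open Finset

noncomputable section

open Real Filter Topology

section

variable {Ω : Type*} [Fintype Ω]

lemma entropy_eq_sum_negMulLog (p : Ω → ℝ) : entropy p = ∑ ω, negMulLog (p ω) := by
  simp [entropy, negMulLog, ← sum_neg_distrib]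

lemma convex_setOf_isDist : Convex ℝ {p : Ω → ℝ | IsDist p} := by
  intro p hp q hq a b ha hb hab
  refine ⟨fun ω => ?_, ?_⟩
  · have := hp.1 ω
    have := hq.1 ω
    simp only [Pi.add_apply, Pi.smul_apply, smul_eq_mul]
    positivity
  · simp [sum_add_distrib, ← mul_sum, hp.2, hq.2, hab]

lemma convex_setOf_sum_mul_eq {ι : Type*} (f : ι → Ω → ℝ) (θ : ι → ℝ) :
    Convex ℝ {p : Ω → ℝ | ∀ i, ∑ ω, p ω * f i ω = θ i} := by
  intro p hp q hq a b _ _ hab i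
  simp only [Pi.add_apply, Pi.smul_apply, smul_eq_mul, add_mul, mul_assoc, sum_add_distrib,
    ← mul_sum, hp i, hq i]
  rw [← add_mul, hab, one_mul]

lemma le_entropy_smul_add_smul_of_eq_zero {p q : Ω → ℝ} (hp : ∀ ω, 0 ≤ p ω) (hq : ∀ ω, 0 ≤ q ω)
    {t : ℝ} (ht₀ : 0 ≤ t) (ht₁ : t ≤ 1) {ω₀ : Ω} (h₀ : p ω₀ = 0) :
    (1 - t) * entropy p + t * entropy q + q ω₀ * negMulLog t
      ≤ entropy ((1 - t) • p + t • q) := by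
  set gain : Ω → ℝ := fun ω =>
    negMulLog ((1 - t) * p ω + t * q ω) - ((1 - t) * negMulLog (p ω) + t * negMulLog (q ω))
  have gain_nonneg : ∀ ω, 0 ≤ gain ω := fun ω => by
    have := concaveOn_negMulLog.2 (Set.mem_Ici.2 (hp ω)) (Set.mem_Ici.2 (hq ω))
      (sub_nonneg.2 ht₁) ht₀ (sub_add_cancel 1 t)
    simpa [gain, smul_eq_mul] using this
  have gain_ω₀ : gain ω₀ = q ω₀ * negMulLog t := by
    simp only [gain, h₀, mul_zero, zero_add, negMulLog_zero, negMulLog_mul]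
    ring
  have hsum : entropy ((1 - t) • p + t • q) - ((1 - t) * entropy p + t * entropy q) =
      ∑ ω, gain ω := by
    simp only [gain, entropy_eq_sum_negMulLog, Pi.add_apply, Pi.smul_apply, smul_eq_mul,
      sum_sub_distrib, sum_add_distrib, mul_sum]
  linarith [single_le_sum (fun ω _ => gain_nonneg ω) (mem_univ ω₀)]

end

lemma eventually_pos_mul_add_mul_negMulLog (a : ℝ) {c : ℝ} (hc : 0 < c) :
    ∀ᶠ t in 𝓝[>] 0, 0 < t * a + c * negMulLog t := by
  filter_upwards [tendsto_log_nhdsGT_zero.eventually_lt_atBot (a / c), self_mem_nhdsWithin]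
    with t hlog ht
  have : c * log t < a := by rwa [lt_div_iff₀' hc] at hlog
  calc 0 < t * (a - c * log t) := mul_pos ht (by linarith)
    _ = t * a + c * negMulLog t := by rw [negMulLog]; ring

theorem maxEnt_support_maximal_general
    {Ω ι : Type*} [Fintype Ω] [Fintype ι]
    (f : ι → Ω → ℝ) (θ : ι → ℝ)
    (pstar : Ω → ℝ) (hps : IsDist pstar)
    (hpsc : ∀ i, ∑ ω, pstar ω * f i ω = θ i)
    (hpsmax : ∀ p : Ω → ℝ, IsDist p → (∀ i, ∑ ω, p ω * f i ω = θ i) →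
      entropy p ≤ entropy pstar)
    (ω₀ : Ω) (h0 : pstar ω₀ = 0) :
    ∀ p : Ω → ℝ, IsDist p → (∀ i, ∑ ω, p ω * f i ω = θ i) → p ω₀ = 0 := by
  intro p hp hpc
  by_contra hne
  have hc : 0 < p ω₀ := (hp.1 ω₀).lt_of_ne' hne
  obtain ⟨t, hgain, ht₀, ht₁⟩ :=
    ((eventually_pos_mul_add_mul_negMulLog (entropy p - entropy pstar) hc).and
      (Ioo_mem_nhdsGT one_pos)).exists
  have hmix_dist := convex_setOf_isDist hps hp (sub_nonneg.2 ht₁.le) ht₀.le (sub_add_cancel 1 t)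
  have hmix_moments := convex_setOf_sum_mul_eq f θ hpsc hpc (sub_nonneg.2 ht₁.le) ht₀.le
    (sub_add_cancel 1 t)
  have hmax := hpsmax _ hmix_dist hmix_moments
  have hlower := le_entropy_smul_add_smul_of_eq_zero hps.1 hp.1 ht₀.le ht₁.le h0
  linarith

/-- Csiszár's support lemma: if the maximum entropy distribution `pstar` on a
finite space subject to linear moment constraints (with indicator constraint functions)
vanishes at some point `ω₀`, then every distribution satisfying the same constraints also
vanishes at `ω₀`. -/
theorem maxEnt_support_maximal
    {Ω ι : Type*} [Fintype Ω] [Fintype ι]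
    (f : ι → Ω → ℝ) (θ : ι → ℝ)
    (hind : ∀ i ω, f i ω = 0 ∨ f i ω = 1)
    (pstar : Ω → ℝ) (hps : IsDist pstar)
    (hpsc : ∀ i, ∑ ω, pstar ω * f i ω = θ i)
    (hpsmax : ∀ p : Ω → ℝ, IsDist p → (∀ i, ∑ ω, p ω * f i ω = θ i) →
      entropy p ≤ entropy pstar)
    (ω₀ : Ω) (h0 : pstar ω₀ = 0) :
    ∀ p : Ω → ℝ, IsDist p → (∀ i, ∑ ω, p ω * f i ω = θ i) → p ω₀ = 0 :=
  maxEnt_support_maximal_general f θ pstar hps hpsc hpsmax ω₀ h0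
end
end
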